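/- arXiv:alg-geom/9608028 — 5 statements merged into one kernel-verified Lean document; each statement's English description precedes it below -/
import Mathlib

section
/- Let k be a field, n a natural number, and a : Fin n → ℤ weights with a i ≠ 0 for all i. Let V₀ denote the set of nonzero vectors x : Fin n → k, and let the group kˣ × kˣ act on V₀ × k by ((c,g)·(x,w)) i = c · g^{a i} · x i in the first factor and (c,g)·w = g⁻¹ · w in the second (ℤ-powers taken in kˣ). Define the stable locus S ⊆ V₀ × k to consist of all pairs (x,w) such that either (w ≠ 0 and there exists i with x i ≠ 0 and a i > 0) or (w = 0 and there exist i, j with x i ≠ 0, a i > 0 and x j ≠ 0, a j < 0). Then: (1) S is invariant under the kˣ × kˣ action; (2) the map sending x to the orbit of (x,1) induces a well-defined injection from the quotient of {x ∈ V₀ : ∃ i, x i ≠ 0 ∧ a i > 0} by overall scalar multiplication by kˣ into the orbit space S/(kˣ × kˣ), whose image is exactly the set of orbits of points with w ≠ 0; (3) the map sending x to the orbit of (x,0) induces a well-defined injection from the quotient of {x ∈ V₀ : (∃ i, x i ≠ 0 ∧ a i > 0) ∧ (∃ j, x j ≠ 0 ∧ a j < 0)} by the kˣ × kˣ action ((c,g)·x)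 i = c · g^{a i} · x i into S/(kˣ × kˣ), whose image is exactly the set of orbits of points with w = 0. Consequently the orbit space S/(kˣ × kˣ) is the disjoint union of these two pieces. -/
open Function

namespace AlgebraicCut

variable (k : Type*) [Field k] (n : ℕ) (a : Fin n → ℤ)

/-- The action of `(c, g) ∈ kˣ × kˣ` on a pair `(x, w)`:
`((c,g) • (x,w)) i = c * g ^ (a i) * x i` and `(c,g) • w = g⁻¹ * w`. -/
def act (c g : kˣ) (p : (Fin n → k) × k) : (Fin n → k) × k :=
  (fun i => (c : k) * ((g ^ a i : kˣ) : k) * p.1 i, ((g⁻¹ : kˣ) : k) * p.2)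

/-- The stable locus `S ⊆ V₀ × k`: pairs `(x, w)` with `x ≠ 0` such that either
(`w ≠ 0` and some coordinate with positive weight is nonzero) or (`w = 0` and
both a positive-weight and a negative-weight coordinate are nonzero). -/
def stable : Set ((Fin n → k) × k) :=
  {p | p.1 ≠ 0 ∧
    ((p.2 ≠ 0 ∧ ∃ i, p.1 i ≠ 0 ∧ 0 < a i) ∨
     (p.2 = 0 ∧ (∃ i, p.1 i ≠ 0 ∧ 0 < a i) ∧ ∃ j, p.1 j ≠ 0 ∧ a j < 0))}

/-- The orbit relation of `kˣ × kˣ` on the stable locus. -/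
def orbitRel (p q : stable k n a) : Prop :=
  ∃ c g : kˣ, (q : (Fin n → k) × k) = act k n a c g (p : (Fin n → k) × k)

/-- `X_{>0}`: nonzero vectors having a nonzero coordinate of positive weight. -/
def XPos : Set (Fin n → k) := {x | x ≠ 0 ∧ ∃ i, x i ≠ 0 ∧ 0 < a i}

/-- Overall scalar multiplication relation on `X_{>0}`. -/
def scalarRel (x y : XPos k n a) : Prop :=
  ∃ c : kˣ, (y : Fin n → k) = fun i => (c : k) * (x : Fin n → k) i

/-- `X^s`: nonzero vectors having nonzero coordinates of both positive and negative
weight. -/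
def XStable : Set (Fin n → k) :=
  {x | x ≠ 0 ∧ (∃ i, x i ≠ 0 ∧ 0 < a i) ∧ ∃ j, x j ≠ 0 ∧ a j < 0}

/-- The `kˣ × kˣ`-orbit relation on `X^s`: `((c,g) • x) i = c * g ^ (a i) * x i`. -/
def fullRel (x y : XStable k n a) : Prop :=
  ∃ c g : kˣ, (y : Fin n → k) = fun i => (c : k) * ((g ^ a i : kˣ) : k) * (x : Fin n → k) i

section

variable {k n a}

theorem act_act (c g c' g' : kˣ) (p : (Fin n → k) × k) :
    act k n a c g (act k n a c' g' p) = act k n a (c * c') (g * g') p := by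
  ext <;> simp only [act, mul_zpow, mul_inv, Units.val_mul] <;> ring

theorem act_one (p : (Fin n → k) × k) : act k n a 1 1 p = p := by
  ext <;> simp [act]

theorem act_fst_apply_eq_zero_iff (c g : kˣ) (p : (Fin n → k) × k) (i : Fin n) :
    (act k n a c g p).1 i = 0 ↔ p.1 i = 0 := by
  simp only [act, mul_assoc, Units.mul_right_eq_zero]

theorem act_fst_eq_zero_iff (c g : kˣ) (p : (Fin n → k) × k) :
    (act k n a c g p).1 = 0 ↔ p.1 = 0 := by
  simp only [funext_iff, Pi.zero_apply, act_fst_apply_eq_zero_iff]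

theorem act_snd_eq_zero_iff (c g : kˣ) (p : (Fin n → k) × k) :
    (act k n a c g p).2 = 0 ↔ p.2 = 0 :=
  Units.mul_right_eq_zero _

theorem act_mem_stable_iff (c g : kˣ) (p : (Fin n → k) × k) :
    act k n a c g p ∈ stable k n a ↔ p ∈ stable k n a := by
  simp only [stable, Set.mem_ofPred_eq, ne_eq, act_fst_eq_zero_iff, act_fst_apply_eq_zero_iff,
    act_snd_eq_zero_iff]

theorem fst_mem_XPos {p : (Fin n → k) × k} (hp : p ∈ stable k n a) (hw : p.2 ≠ 0) :
    p.1 ∈ XPos k n a := by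
  obtain ⟨hx, ⟨-, hpos⟩ | ⟨hw', -⟩⟩ := hp
  exacts [⟨hx, hpos⟩, absurd hw' hw]

theorem fst_mem_XStable {p : (Fin n → k) × k} (hp : p ∈ stable k n a) (hw : p.2 = 0) :
    p.1 ∈ XStable k n a := by
  obtain ⟨hx, ⟨hw', -⟩ | ⟨-, hpm⟩⟩ := hp
  exacts [absurd hw hw', ⟨hx, hpm⟩]

theorem orbitRel_equivalence : Equivalence (orbitRel k n a) where
  refl _ := ⟨1, 1, (act_one _).symm⟩
  symm := by
    rintro p q ⟨c, g, hq⟩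
    exact ⟨c⁻¹, g⁻¹, by rw [hq, act_act, inv_mul_cancel, inv_mul_cancel, act_one]⟩
  trans := by
    rintro p q r ⟨c, g, hq⟩ ⟨c', g', hr⟩
    exact ⟨c' * c, g' * g, by rw [hr, hq, act_act]⟩

theorem orbitRel_of_mk_eq_mk {p q : stable k n a} 
    (h : Quot.mk (orbitRel k n a) p = Quot.mk _ q) :
    orbitRel k n a p q :=
  orbitRel_equivalence.eqvGen_iff.mp (Quot.eqvGen_exact h)

theorem snd_eq_zero_iff_of_mk_eq_mk {p q : stable k n a} 
    (h : Quot.mk (orbitRel k n a) p = Quot.mk _ q) :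
    (p : (Fin n → k) × k).2 = 0 ↔ (q : (Fin n → k) × k).2 = 0 := by
  obtain ⟨c, g, hq⟩ := orbitRel_of_mk_eq_mk h
  rw [hq, act_snd_eq_zero_iff]

def actStable (c g : kˣ) (p : stable k n a) : stable k n a :=
  ⟨act k n a c g p, (act_mem_stable_iff c g _).mpr p.2⟩

theorem mk_actStable (c g : kˣ) (p : stable k n a) :
    Quot.mk (orbitRel k n a) (actStable c g p) = Quot.mk _ p :=
  (Quot.sound ⟨c, g, rfl⟩).symm

def stableOfXPos (x : XPos k n a) : stable k n a :=
  ⟨(x, 1), x.2.1, Or.inl ⟨one_ne_zero, x.2.2⟩⟩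

def stableOfXStable (x : XStable k n a) : stable k n a :=
  ⟨(x, 0), x.2.1, Or.inr ⟨rfl, x.2.2⟩⟩

def posMap : Quot (scalarRel k n a) → Quot (orbitRel k n a) :=
  Quot.lift (Quot.mk _ ∘ stableOfXPos) <| by
    rintro x y ⟨c, hy⟩
    refine Quot.sound ⟨c, 1, Prod.ext ?_ ?_⟩ <;> simp [act, stableOfXPos, hy]

def reducedMap : Quot (fullRel k n a) → Quot (orbitRel k n a) :=
  Quot.lift (Quot.mk _ ∘ stableOfXStable) <| by
    rintro x y ⟨c, g, hy⟩
    refine Quot.sound ⟨c, g, Prod.ext ?_ ?_⟩ <;> simp [act, stableOfXStable, hy]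

theorem posMap_injective : Injective (posMap (k := k) (n := n) (a := a)) := by
  rintro ⟨x⟩ ⟨y⟩ h
  obtain ⟨c, g, hxy⟩ := orbitRel_of_mk_eq_mk h
  have hg : g = 1 := by
    simpa [act, stableOfXPos, eq_comm] using congrArg Prod.snd hxy
  refine Quot.sound ⟨c, ?_⟩
  simpa [act, stableOfXPos, hg] using congrArg Prod.fst hxy

theorem reducedMap_injective : Injective (reducedMap (k := k) (n := n) (a := a)) := by
  rintro ⟨x⟩ ⟨y⟩ h
  obtain ⟨c, g, hxy⟩ := orbitRel_of_mk_eq_mk h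
  exact Quot.sound ⟨c, g, congrArg Prod.fst hxy⟩

-- Acting by `g = w` rescales a point `(x, w)` with `w ≠ 0` to one with `w = 1`.
theorem range_posMap : Set.range (posMap (k := k) (n := n) (a := a)) =
    {q | ∃ p : stable k n a, (p : (Fin n → k) × k).2 ≠ 0 ∧ Quot.mk _ p = q} := by
  ext q
  constructor
  · rintro ⟨⟨x⟩, rfl⟩
    exact ⟨stableOfXPos x, one_ne_zero, rfl⟩
  · rintro ⟨p, hw, rfl⟩
    set p' := actStable 1 (Units.mk0 _ hw) p
    have hw' : (p' : (Fin n → k) × k).2 = 1 := Units.inv_mul _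
    refine ⟨Quot.mk _ ⟨_, fst_mem_XPos p'.2 (hw' ▸ one_ne_zero)⟩, ?_⟩
    rw [← mk_actStable 1 (Units.mk0 _ hw) p]
    exact congrArg (Quot.mk _) (Subtype.ext (Prod.ext rfl hw'.symm))

theorem range_reducedMap : Set.range (reducedMap (k := k) (n := n) (a := a)) =
    {q | ∃ p : stable k n a, (p : (Fin n → k) × k).2 = 0 ∧ Quot.mk _ p = q} := by
  ext q
  constructor
  · rintro ⟨⟨x⟩, rfl⟩
    exact ⟨stableOfXStable x, rfl, rfl⟩
  · rintro ⟨p, hw, rfl⟩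
    exact ⟨Quot.mk _ ⟨_, fst_mem_XStable p.2 hw⟩,
      congrArg (Quot.mk _) (Subtype.ext (Prod.ext rfl hw.symm))⟩

end

theorem algebraic_cut_decomposition :
    (∀ p ∈ stable k n a, ∀ c g : kˣ, act k n a c g p ∈ stable k n a) ∧
    ∃ (f : Quot (scalarRel k n a) → Quot (orbitRel k n a))
      (f' : Quot (fullRel k n a) → Quot (orbitRel k n a)),
      (∀ (x : XPos k n a) (p : stable k n a),
          (p : (Fin n → k) × k) = ((x : Fin n → k), 1) →
          f (Quot.mk _ x) = Quot.mk _ p) ∧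
      Injective f ∧
      Set.range f =
        {q | ∃ p : stable k n a, (p : (Fin n → k) × k).2 ≠ 0 ∧ Quot.mk _ p = q} ∧
      (∀ (x : XStable k n a) (p : stable k n a),
          (p : (Fin n → k) × k) = ((x : Fin n → k), 0) →
          f' (Quot.mk _ x) = Quot.mk _ p) ∧
      Injective f' ∧
      Set.range f' =
        {q | ∃ p : stable k n a, (p : (Fin n → k) × k).2 = 0 ∧ Quot.mk _ p = q} ∧
      Set.range f ∩ Set.range f' = ∅ ∧
      Set.range f ∪ Set.range f' = Set.univ := by
  refine ⟨fun p hp c g => (act_mem_stable_iff c g p).mpr hp, posMap, reducedMap,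
    fun x p hp => congrArg (Quot.mk _) (Subtype.ext hp).symm, posMap_injective, range_posMap,
    fun x p hp => congrArg (Quot.mk _) (Subtype.ext hp).symm, reducedMap_injective,
    range_reducedMap, ?_, ?_⟩
  · rw [range_posMap, range_reducedMap, Set.eq_empty_iff_forall_notMem]
    rintro q ⟨⟨p, hw, rfl⟩, p', hw', hp'⟩
    exact hw ((snd_eq_zero_iff_of_mk_eq_mk hp').mp hw')
  · rw [range_posMap, range_reducedMap, Set.eq_univ_iff_forall]
    rintro ⟨p⟩
    exact (em ((p : (Fin n → k) × k).2 = 0)).symm.imp (⟨p, ·, rfl⟩) (⟨p, ·, rfl⟩)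

end AlgebraicCut
end

section
/- Let k be a field, n a natural number, a : Fin n → ℤ weights with a i ≠ 0 for all i, and N ∈ ℤ with N > a i for every i. For a nonzero vector x : Fin n → k and w ∈ k, define the antidiagonal weight set Π_A(x,w) = {a i : x i ≠ 0} ∪ {a i − N : x i ≠ 0 and w ≠ 0}. Then Π_A(x,w) contains both a positive and a negative integer if and only if either (w = 0 and the set {a i : x i ≠ 0} contains both a positive and a negative integer) or (w ≠ 0 and the set {a i : x i ≠ 0} contains a positive integer). -/
/-! The shifted weights `a i - N` are all negative because `N` exceeds every weight, so a positive
element of `Π_A(x,w)` is always an unshifted weight. A negative element is either a negative weight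
of `x` or, when `w ≠ 0`, the shift of any weight of `x`; in the latter case the positive weight
already supplies one. -/

section AntidiagonalWeights

variable {ι R : Type*} [Zero R] (a : ι → ℤ) (N : ℤ) (x : ι → R) (w : R)

/-- The set `Π_A(x,w)` of the paper. -/
def antidiagonalWeights : Set ℤ :=
  {m | ∃ i, x i ≠ 0 ∧ m = a i} ∪ {m | ∃ i, x i ≠ 0 ∧ w ≠ 0 ∧ m = a i - N}

variable {a N x w}

theorem exists_pos_mem_antidiagonalWeights_iff (hN : ∀ i, a i < N) :
    (∃ m ∈ antidiagonalWeights a N x w, 0 < m) ↔ ∃ i, x i ≠ 0 ∧ 0 < a i := by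
  constructor
  · rintro ⟨m, ⟨i, hi, rfl⟩ | ⟨i, -, -, rfl⟩, hm⟩
    · exact ⟨i, hi, hm⟩
    · exact absurd hm (by linarith [hN i])
  · rintro ⟨i, hi, hai⟩
    exact ⟨a i, Or.inl ⟨i, hi, rfl⟩, hai⟩

theorem exists_neg_mem_antidiagonalWeights_iff (hN : ∀ i, a i < N) :
    (∃ m ∈ antidiagonalWeights a N x w, m < 0) ↔
      (∃ i, x i ≠ 0 ∧ a i < 0) ∨ (w ≠ 0 ∧ ∃ i, x i ≠ 0) := by
  constructor
  · rintro ⟨m, ⟨i, hi, rfl⟩ | ⟨i, hi, hw, rfl⟩, hm⟩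
    · exact Or.inl ⟨i, hi, hm⟩
    · exact Or.inr ⟨hw, i, hi⟩
  · rintro (⟨i, hi, hai⟩ | ⟨hw, i, hi⟩)
    · exact ⟨a i, Or.inl ⟨i, hi, rfl⟩, hai⟩
    · exact ⟨a i - N, Or.inr ⟨i, hi, hw, rfl⟩, by linarith [hN i]⟩

end AntidiagonalWeights

theorem antidiagonal_stability_affine_general (k : Type*) [Field k] (n : ℕ) (a : Fin n → ℤ)
    (N : ℤ) (hN : ∀ i, a i < N)
    (x : Fin n → k) (w : k) :
    ((∃ m ∈ ({m : ℤ | ∃ i, x i ≠ 0 ∧ m = a i} ∪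
        {m : ℤ | ∃ i, x i ≠ 0 ∧ w ≠ 0 ∧ m = a i - N}), 0 < m) ∧
     (∃ m ∈ ({m : ℤ | ∃ i, x i ≠ 0 ∧ m = a i} ∪
        {m : ℤ | ∃ i, x i ≠ 0 ∧ w ≠ 0 ∧ m = a i - N}), m < 0)) ↔
    ((w = 0 ∧ (∃ i, x i ≠ 0 ∧ 0 < a i) ∧ ∃ j, x j ≠ 0 ∧ a j < 0) ∨
     (w ≠ 0 ∧ ∃ i, x i ≠ 0 ∧ 0 < a i)) := by
  change (∃ m ∈ antidiagonalWeights a N x w, 0 < m) ∧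
      (∃ m ∈ antidiagonalWeights a N x w, m < 0) ↔ _
  rw [exists_pos_mem_antidiagonalWeights_iff hN, exists_neg_mem_antidiagonalWeights_iff hN]
  by_cases hw : w = 0
  · simp [hw]
  · simp only [hw, false_and, ne_eq, not_false_eq_true, true_and, false_or]
    exact ⟨And.left, fun ⟨i, hi, hai⟩ ↦ ⟨⟨i, hi, hai⟩, Or.inr ⟨i, hi⟩⟩⟩

/-- Let `k` be a field, `a : Fin n → ℤ` weights with `a i ≠ 0` for all `i`,
and `N : ℤ` with `N > a i` for every `i`.  For a nonzero vector `x : Fin n → k` and `w ∈ k`,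
the antidiagonal weight set `Π_A(x,w) = {a i : x i ≠ 0} ∪ {a i - N : x i ≠ 0 ∧ w ≠ 0}`
contains both a positive and a negative integer if and only if either (`w = 0` and
`{a i : x i ≠ 0}` contains both a positive and a negative integer) or (`w ≠ 0` and
`{a i : x i ≠ 0}` contains a positive integer). -/
theorem antidiagonal_stability_affine (k : Type*) [Field k] (n : ℕ) (a : Fin n → ℤ)
    (ha : ∀ i, a i ≠ 0) (N : ℤ) (hN : ∀ i, a i < N)
    (x : Fin n → k) (hx : x ≠ 0) (w : k) :
    ((∃ m ∈ ({m : ℤ | ∃ i, x i ≠ 0 ∧ m = a i} ∪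
        {m : ℤ | ∃ i, x i ≠ 0 ∧ w ≠ 0 ∧ m = a i - N}), 0 < m) ∧
     (∃ m ∈ ({m : ℤ | ∃ i, x i ≠ 0 ∧ m = a i} ∪
        {m : ℤ | ∃ i, x i ≠ 0 ∧ w ≠ 0 ∧ m = a i - N}), m < 0)) ↔
    ((w = 0 ∧ (∃ i, x i ≠ 0 ∧ 0 < a i) ∧ ∃ j, x j ≠ 0 ∧ a j < 0) ∨
     (w ≠ 0 ∧ ∃ i, x i ≠ 0 ∧ 0 < a i)) :=
  antidiagonal_stability_affine_general k n a N hN x w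
end

section
/- Let k be an infinite field, n a natural number, and a : Fin n → ℤ weights with a i ≠ 0 for all i. Let τ be a polynomial over k in the variables X 0, …, X (n−1) and an additional variable w (i.e. τ ∈ Polynomial (MvPolynomial (Fin n) k), with w the outer variable). Say τ is antidiagonally invariant if for every g ∈ kˣ, the k-algebra substitution sending X i to g^{a i} • X i (ℤ-power in kˣ) and w to g⁻¹ • w fixes τ. Assume τ is antidiagonally invariant and that the coefficient of w⁰ in τ has zero constant term (as a multivariate polynomial in the X i). Then for every x : Fin n → k such that either x i = 0 for all i with a i < 0, or x i = 0 for all i with a i > 0, the evaluation of τ at (x, 0) is zero. -/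
/-!
Invariance under `g ∈ kˣ` says that `p = τ.coeff 0` satisfies `p (g ^ a • x) = p x`. When `x` is
supported on positive weights (the negative case follows by replacing `g` with `g⁻¹`), this says
that the one-variable polynomial `t ↦ p (t ^ |a| • x)` is constant on `kˣ`, hence constant since
`k` is infinite. Its value at `t = 0`, where every `a i ≠ 0` kills the coordinate, is the constant
term of `p`, which is zero.
-/

open Polynomial in
theorem Polynomial.coeff_zero_eval₂_C_comp_smul_X {R S T : Type*} [CommSemiring R]
    [CommSemiring S] [CommSemiring T] [Algebra R T] (ψ : S →+* T) (c : R) (τ : S[X]) :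
    (τ.eval₂ (C.comp ψ) (c • X)).coeff 0 = ψ (τ.coeff 0) := by
  rw [coeff_zero_eq_eval_zero, ← coe_evalRingHom, hom_eval₂, coe_evalRingHom, eval_smul, eval_X,
    smul_zero, eval₂_at_zero, RingHom.comp_apply, RingHom.comp_apply, coe_evalRingHom, eval_C]

namespace MvPolynomial

variable {σ : Type*}

theorem eval_aeval_smul_X {R : Type*} [CommSemiring R] (p : MvPolynomial σ R) (c x : σ → R) :
    eval x (aeval (fun i => c i • X i) p) = eval (fun i => c i * x i) p := by
  rw [← aeval_eq_eval, ← aeval_eq_eval, comp_aeval_apply]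
  simp

variable {k : Type*} [Field k] [Infinite k]

theorem eval_eq_constantCoeff_of_eval_mul_pow_eq (p : MvPolynomial σ k) (x : σ → k)
    (e : σ → ℕ) (he : ∀ i, e i ≠ 0)
    (h : ∀ t : k, t ≠ 0 → eval (fun i => x i * t ^ e i) p = eval x p) :
    eval x p = constantCoeff p := by
  set Q : Polynomial k := aeval (fun i => Polynomial.C (x i) * Polynomial.X ^ e i) p
  have hQ : ∀ t, Q.eval t = eval (fun i => x i * t ^ e i) p := fun t => by
    rw [← Polynomial.coe_aeval_eq_eval, comp_aeval_apply]
    simp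
  have hQc : Q = Polynomial.C (eval x p) := by
    refine Polynomial.eq_of_infinite_eval_eq _ _ ((Set.finite_singleton 0).infinite_compl.mono
      fun t ht => ?_)
    exact (hQ t).trans ((h t ht).trans Polynomial.eval_C.symm)
  calc eval x p = Q.eval 0 := by rw [hQc, Polynomial.eval_C]
    _ = constantCoeff p := by
      rw [hQ, ← eval_zero]
      exact congrArg (eval · p) (_root_.funext fun i => by simp [he i])

theorem eval_eq_constantCoeff_of_eval_zpow_mul_eq (p : MvPolynomial σ k) (x : σ → k)
    (a : σ → ℤ) (ha : ∀ i, a i ≠ 0) (hx : ∀ i, a i < 0 → x i = 0)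
    (h : ∀ g : kˣ, eval (fun i => ((g ^ a i : kˣ) : k) * x i) p = eval x p) :
    eval x p = constantCoeff p := by
  refine eval_eq_constantCoeff_of_eval_mul_pow_eq p x (fun i => (a i).natAbs)
    (fun i => Int.natAbs_ne_zero.mpr (ha i)) fun t ht => ?_
  rw [← h (Units.mk0 t ht)]
  refine congrArg (eval · p) (_root_.funext fun i => ?_)
  rcases (ha i).lt_or_gt with hneg | hpos
  · simp [hx i hneg]
  · rw [mul_comm, Units.val_zpow_eq_zpow_val, Units.val_mk0, ← zpow_natCast,
      Int.natAbs_of_nonneg hpos.le]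

end MvPolynomial

open MvPolynomial in
/-- Over an infinite field `k`, with nonzero weights `a i`, let
`τ ∈ Polynomial (MvPolynomial (Fin n) k)` (outer variable `w`) be antidiagonally
invariant: for every `g ∈ kˣ` the `k`-algebra substitution `X i ↦ g ^ (a i) • X i`,
`w ↦ g⁻¹ • w` fixes `τ`.  Assume the coefficient of `w⁰` in `τ` has zero constant term.
Then `τ` vanishes at `(x, 0)` for every `x` with either `x i = 0` for all `i` with
`a i < 0`, or `x i = 0` for all `i` with `a i > 0`. -/
theorem invariant_section_vanishes_type_ii (k : Type*) [Field k] [Infinite k] (n : ℕ)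
    (a : Fin n → ℤ) (ha : ∀ i, a i ≠ 0)
    (τ : Polynomial (MvPolynomial (Fin n) k))
    (hinv : ∀ g : kˣ,
      Polynomial.eval₂
        ((Polynomial.C : MvPolynomial (Fin n) k →+* Polynomial (MvPolynomial (Fin n) k)).comp
          (MvPolynomial.aeval
            (fun i => ((g ^ a i : kˣ) : k) •
              (MvPolynomial.X i : MvPolynomial (Fin n) k))).toRingHom)
        (((g⁻¹ : kˣ) : k) • (Polynomial.X : Polynomial (MvPolynomial (Fin n) k))) τ = τ)
    (hconst : MvPolynomial.constantCoeff (τ.coeff 0) = 0)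
    (x : Fin n → k)
    (hx : (∀ i, a i < 0 → x i = 0) ∨ (∀ i, 0 < a i → x i = 0)) :
    Polynomial.eval₂ (MvPolynomial.eval x) 0 τ = 0 := by
  set p := τ.coeff 0
  have hp : ∀ g : kˣ, aeval (fun i => ((g ^ a i : kˣ) : k) • X i) p = p := fun g => by
    simpa only [Polynomial.coeff_zero_eval₂_C_comp_smul_X, AlgHom.toRingHom_eq_coe,
      RingHom.coe_coe] using congrArg (Polynomial.coeff · 0) (hinv g)
  have heval : ∀ g : kˣ, eval (fun i => ((g ^ a i : kˣ) : k) * x i) p = eval x p := fun g => by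
    rw [← eval_aeval_smul_X, hp]
  rw [Polynomial.eval₂_at_zero, ← hconst]
  rcases hx with hneg | hpos
  · exact eval_eq_constantCoeff_of_eval_zpow_mul_eq p x a ha hneg heval
  · refine eval_eq_constantCoeff_of_eval_zpow_mul_eq p x (-a) (by simpa using ha)
      (fun i hi => hpos i (neg_neg_iff_pos.mp hi)) fun g => ?_
    simpa [zpow_neg, inv_zpow'] using heval g⁻¹
end

section
/- Let k be an infinite field, n a natural number, and a : Fin n → ℤ weights with a i ≠ 0 for all i. Let τ be a polynomial over k in the variables X 0, …, X (n−1) and an additional variable w (i.e. τ ∈ Polynomial (MvPolynomial (Fin n) k), with w the outer variable). Say τ is antidiagonally invariant if for every g ∈ kˣ, the k-algebra substitution sending X i to g^{a i} • X i (ℤ-power in kˣ) and w to g⁻¹ • w fixes τ. Assume τ is antidiagonally invariant and that the coefficient of w⁰ in τ has zero constant term (as a multivariate polynomial in the X i). Then for every x : Fin n → k with x i = 0 for all i with a i > 0, and for every w₀ ∈ k, the evaluation of τ at (x, w₀) is zero. -/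
/-!
Taking `g = t⁻¹` in the invariance, `τ` has the same value at `(x, w₀)` as at
`(t ^ (-a i) • x i, t • w₀)` for every `t ≠ 0`. Since `x` lives on the negative weights this is a
polynomial curve in `t` through the origin at `t = 0`, so `τ` along it is a polynomial in `t`,
constant off `0` and hence, `k` being infinite, also at `0`, where it is the constant term of
`τ.coeff 0`.
-/

open Polynomial

namespace Polynomial

variable {R σ : Type*} [CommSemiring R]

theorem eval₂_eval_eval₂_smul_X (τ : (MvPolynomial σ R)[X]) (u x : σ → R) (c w₀ : R) :
    eval₂ (MvPolynomial.eval x) w₀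
        (eval₂ (C.comp (MvPolynomial.aeval fun i => u i • MvPolynomial.X i).toRingHom)
          (c • X) τ) =
      eval₂ (MvPolynomial.eval fun i => u i * x i) (c * w₀) τ := by
  rw [← coe_eval₂RingHom, hom_eval₂]
  congr 1
  · ext <;> simp
  · simp [Algebra.smul_def]

theorem eval_eval₂_eval₂Hom (τ : (MvPolynomial σ R)[X]) (p : σ → R[X]) (q : R[X]) (t : R) :
    (eval₂ (MvPolynomial.eval₂Hom C p) q τ).eval t =
      eval₂ (MvPolynomial.eval fun i => (p i).eval t) (q.eval t) τ := by
  rw [← coe_evalRingHom, hom_eval₂]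
  congr 1
  ext <;> simp

theorem eval_zero_eq_of_eval_eq_of_ne_zero {D : Type*} [CommRing D] [IsDomain D] [Infinite D]
    {p : D[X]} {c : D} (h : ∀ t ≠ 0, p.eval t = c) : p.eval 0 = c := by
  have hp : p = C c := eq_of_infinite_eval_eq _ _ <|
    (Set.finite_singleton 0).infinite_compl.mono fun t ht => by simpa using h t ht
  simp [hp]

end Polynomial

/-- Over an infinite field `k`, with nonzero weights `a i`, let
`τ ∈ Polynomial (MvPolynomial (Fin n) k)` (outer variable `w`) be antidiagonally
invariant: for every `g ∈ kˣ` the `k`-algebra substitution `X i ↦ g ^ (a i) • X i`,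
`w ↦ g⁻¹ • w` fixes `τ`.  Assume the coefficient of `w⁰` in `τ` has zero constant term.
Then `τ` vanishes at `(x, w₀)` for every `x` with `x i = 0` for all `i` with `a i > 0`
and every `w₀ ∈ k`. -/
theorem invariant_section_vanishes_type_iii (k : Type*) [Field k] [Infinite k] (n : ℕ)
    (a : Fin n → ℤ) (ha : ∀ i, a i ≠ 0)
    (τ : Polynomial (MvPolynomial (Fin n) k))
    (hinv : ∀ g : kˣ,
      Polynomial.eval₂
        ((Polynomial.C : MvPolynomial (Fin n) k →+* Polynomial (MvPolynomial (Fin n) k)).comp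
          (MvPolynomial.aeval
            (fun i => ((g ^ a i : kˣ) : k) •
              (MvPolynomial.X i : MvPolynomial (Fin n) k))).toRingHom)
        (((g⁻¹ : kˣ) : k) • (Polynomial.X : Polynomial (MvPolynomial (Fin n) k))) τ = τ)
    (hconst : MvPolynomial.constantCoeff (τ.coeff 0) = 0)
    (x : Fin n → k) (hx : ∀ i, 0 < a i → x i = 0) (w₀ : k) :
    Polynomial.eval₂ (MvPolynomial.eval x) w₀ τ = 0 := by
  set Q : k[X] := eval₂ (MvPolynomial.eval₂Hom C fun i => C (x i) * X ^ (-a i).toNat) (X * C w₀) τ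
  have hQ (t : k) : Q.eval t =
      eval₂ (MvPolynomial.eval fun i => x i * t ^ (-a i).toNat) (t * w₀) τ := by
    simp only [Q, eval_eval₂_eval₂Hom, eval_mul, eval_C, eval_X, eval_pow]
  have hcurve (t : k) (ht : t ≠ 0) : Q.eval t = eval₂ (MvPolynomial.eval x) w₀ τ := by
    have hweight (i : Fin n) : x i * t ^ (-a i).toNat = t⁻¹ ^ a i * x i := by
      rcases (ha i).lt_or_gt with hneg | hpos
      · rw [inv_zpow', ← zpow_natCast, Int.toNat_of_nonneg (by omega), mul_comm]
      · simp [hx i hpos]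
    conv_rhs => rw [← hinv (Units.mk0 t ht)⁻¹, eval₂_eval_eval₂_smul_X]
    simp [hQ, hweight]
  have hQ0 : Q.eval 0 = 0 := by
    have hcenter : (fun i => x i * (0 : k) ^ (-a i).toNat) = 0 := by
      funext i
      rcases (ha i).lt_or_gt with hneg | hpos
      · simp [zero_pow (by omega : (-a i).toNat ≠ 0)]
      · simp [hx i hpos]
    rw [hQ, hcenter, zero_mul, eval₂_at_zero, MvPolynomial.eval_zero, hconst]
  rw [← eval_zero_eq_of_eval_eq_of_ne_zero hcurve, hQ0]
end

section
/- Let k be an infinite field, n a natural number, and a : Fin n → ℤ weights with a i ≠ 0 for all i. Let s ∈ MvPolynomial (Fin n) k be T-invariant, meaning that for every g ∈ kˣ the k-algebra substitution sending X i to g^{a i} • X i (ℤ-power in kˣ) fixes s, and assume the constant coefficient of s is zero. Then for every x : Fin n → k with x i = 0 for all i with a i < 0, the evaluation of s at x is zero; and likewise for every x : Fin n → k with x i = 0 for all i with a i > 0, the evaluation of s at x is zero. -/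
lemma key_vanish (k : Type*) [Field k] [Infinite k] (n : ℕ)
    (a : Fin n → ℤ) (ha : ∀ i, a i ≠ 0) (s : MvPolynomial (Fin n) k)
    (hinv : ∀ g : kˣ,
      MvPolynomial.aeval
        (fun i => ((g ^ a i : kˣ) : k) • (MvPolynomial.X i : MvPolynomial (Fin n) k)) s = s)
    (hconst : MvPolynomial.constantCoeff s = 0)
    (x : Fin n → k) (hx : ∀ i, a i < 0 → x i = 0) : MvPolynomial.eval x s = 0 := by
  set P : Polynomial k :=
    MvPolynomial.aeval (fun i => Polynomial.C (x i) * Polynomial.X ^ (a i).toNat) s with hP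
  have hevalP : ∀ t : k, Polynomial.eval t P
      = MvPolynomial.eval (fun i => x i * t ^ (a i).toNat) s := by
    intro t
    have h1 : Polynomial.aeval t P
        = MvPolynomial.aeval (fun i =>
            Polynomial.aeval t (Polynomial.C (x i) * Polynomial.X ^ (a i).toNat)) s :=
      MvPolynomial.comp_aeval_apply
        (f := fun i => Polynomial.C (x i) * Polynomial.X ^ (a i).toNat) (Polynomial.aeval t) s
    simpa using h1
  have hne : ∀ t : k, t ≠ 0 → Polynomial.eval t P = MvPolynomial.eval x s := by
    intro t ht
    have h2 := congrArg (MvPolynomial.eval x) (hinv (Units.mk0 t ht))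
    rw [hevalP]
    conv_rhs => rw [← h2]
    rw [show (MvPolynomial.eval x : MvPolynomial (Fin n) k → k)
        = ⇑(MvPolynomial.eval x : MvPolynomial (Fin n) k →+* k) from rfl,
      MvPolynomial.map_aeval]
    rw [MvPolynomial.eval]
    refine MvPolynomial.eval₂Hom_congr (RingHom.ext fun r => by
      rw [RingHom.comp_apply, MvPolynomial.algebraMap_eq, MvPolynomial.eval_C,
        RingHom.id_apply]) ?_ rfl
    · funext i
      rw [MvPolynomial.smul_eq_C_mul, map_mul, MvPolynomial.eval_C, MvPolynomial.eval_X]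
      rcases lt_or_ge (a i) 0 with h1 | h1
      · simp [hx i h1]
      · rw [mul_comm]
        congr 1
        rw [← Int.toNat_of_nonneg h1, zpow_natCast]
        simp [Units.val_pow_eq_pow_val]
        congr 1
        omega
  have hPeq : P = Polynomial.C (MvPolynomial.eval x s) := by
    have hz : (P - Polynomial.C (MvPolynomial.eval x s)) = 0 := by
      apply Polynomial.eq_zero_of_infinite_isRoot
      apply Set.Infinite.mono (s := {(0:k)}ᶜ)
      · intro t ht
        simp only [Set.mem_compl_iff, Set.mem_singleton_iff] at ht
        simp [Polynomial.IsRoot, hne t ht]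
      · exact (Set.finite_singleton (0:k)).infinite_compl
    linear_combination hz
  have h0 : Polynomial.eval 0 P = MvPolynomial.eval x s := by rw [hPeq]; simp
  rw [hevalP 0] at h0
  rw [← h0]
  have hpt : (fun i => x i * (0:k) ^ (a i).toNat) = fun _ => (0:k) := by
    funext i
    rcases lt_or_ge (a i) 0 with h1 | h1
    · simp [hx i h1]
    · rcases lt_or_eq_of_le h1 with h2 | h2
      · rw [zero_pow (by omega), mul_zero]
      · exact absurd h2.symm (ha i)
  rw [hpt]
  have : MvPolynomial.eval (fun _ => (0:k)) s = MvPolynomial.constantCoeff s := by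
    show MvPolynomial.eval 0 s = _
    simp [MvPolynomial.eval_zero']
  rw [this, hconst]


/-- Over an infinite field, let `s ∈ MvPolynomial (Fin n) k` be
`T`-invariant (fixed by every substitution `X i ↦ g ^ (a i) • X i`, `g ∈ kˣ`), with all
weights `a i ≠ 0` and zero constant coefficient.  Then `s` vanishes at every point `x`
whose weight support consists entirely of positive weights (`x i = 0` whenever `a i < 0`),
and likewise at every point whose weight support consists entirely of negative weights
(`x i = 0` whenever `a i > 0`). -/
theorem invariant_polynomial_vanishes (k : Type*) [Field k] [Infinite k] (n : ℕ)
    (a : Fin n → ℤ) (ha : ∀ i, a i ≠ 0) (s : MvPolynomial (Fin n) k)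
    (hinv : ∀ g : kˣ,
      MvPolynomial.aeval
        (fun i => ((g ^ a i : kˣ) : k) • (MvPolynomial.X i : MvPolynomial (Fin n) k)) s = s)
    (hconst : MvPolynomial.constantCoeff s = 0) :
    (∀ x : Fin n → k, (∀ i, a i < 0 → x i = 0) → MvPolynomial.eval x s = 0) ∧
    (∀ x : Fin n → k, (∀ i, 0 < a i → x i = 0) → MvPolynomial.eval x s = 0) := by
  constructor
  · exact fun x hx => key_vanish k n a ha s hinv hconst x hx
  · intro x hx
    refine key_vanish k n (fun i => -a i) (fun i => neg_ne_zero.mpr (ha i)) s ?_ hconst x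
      (fun i hi => hx i (neg_neg_iff_pos.mp hi))
    intro g
    have := hinv g⁻¹
    simpa [zpow_neg, inv_zpow] using this
end
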